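/- arXiv:1311.4683 — 3 statements merged into one kernel-verified Lean document; each statement's English description precedes it below -/
import Mathlib

section
/- Let F/K be an algebraic function field with perfect constant field K, T a set of places of F/K, F' = F(x) a finite separable extension where x is algebraic over K and integral over O_T. Then O_T[x] is integrally closed in F'. -/
open Multiplicative

/-- The value group `ℤᵐ⁰ = WithZero (Multiplicative ℤ)` of a normalized discrete valuation. -/
abbrev Zm0 : Type := WithZero (Multiplicative ℤ)

/-- A place of an algebraic function field `F/K`, given by its associated normalized
(i.e. surjective) discrete valuation `v : F → ℤᵐ⁰`, which is trivial on the constants `K`.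
An element `f` has a zero of order `n` at the place iff `v f = ofAdd (-n)`, and a pole
iff `1 < v f`. -/
def IsFnPlace (K : Type*) {F : Type*} [Field K] [Field F] [Algebra K F]
    (v : Valuation F Zm0) : Prop :=
  Function.Surjective v ∧ ∀ c : K, c ≠ 0 → v (algebraMap K F c) = 1

/-- The place `w` of `F'` lies over the place `v` of `F` (along the embedding `f : F →+* F'`)
with ramification index `e`. -/
def PlaceLiesOver {F F' : Type*} [Field F] [Field F'] (f : F →+* F')
    (v : Valuation F Zm0) (w : Valuation F' Zm0) (e : ℕ) : Prop :=
  ∀ y : F, w (f y) = (v y) ^ e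

/-- The place `v` of `F` is unramified in the extension `F'` (given by `f : F →+* F'`):
every place of `F'` lying above it has ramification index `1`. -/
def UnramifiedIn (K : Type*) {F F' : Type*} [Field K] [Field F] [Field F']
    [Algebra K F'] (f : F →+* F') (v : Valuation F Zm0) : Prop :=
  ∀ (w : Valuation F' Zm0) (e : ℕ), IsFnPlace K w → PlaceLiesOver f v w e → e = 1

/-- `F/K` is an algebraic function field of one variable: there is an element `t`,
transcendental over `K`, such that `F` is a finite extension of `K(t)`. -/
def IsAlgFunctionField (K F : Type*) [Field K] [Field F] [Algebra K F] : Prop :=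
  ∃ t : F, Transcendental K t ∧ FiniteDimensional ↥(IntermediateField.adjoin K {t}) F

/-- `K` is the full constant field of `F/K`: every element of `F` algebraic over `K`
lies in `K`. -/
def IsFullConstantField (K F : Type*) [Field K] [Field F] [Algebra K F] : Prop :=
  ∀ z : F, IsAlgebraic K z → z ∈ (algebraMap K F).range

/-- `t` is a separating element of `F/K`: `F` is finite and separable over `K(t)`. -/
def IsSeparatingElement (K : Type*) {F : Type*} [Field K] [Field F] [Algebra K F]
    (t : F) : Prop :=
  Transcendental K t ∧ FiniteDimensional ↥(IntermediateField.adjoin K {t}) F ∧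
    Algebra.IsSeparable ↥(IntermediateField.adjoin K {t}) F

/-- The ring of `S`-integers of `F/K`: the elements of `F` with no poles outside `S`,
i.e. the intersection of the valuation rings at all places outside `S`. -/
def SInt (K : Type*) {F : Type*} [Field K] [Field F] [Algebra K F]
    (S : Set (Valuation F Zm0)) : Subring F :=
  ⨅ (v : Valuation F Zm0) (_ : IsFnPlace K v) (_ : v ∉ S), v.valuationSubring.toSubring

/-!
Let `d` be the discriminant of the power basis `1, x, …, x^(n-1)` of `F'/F`. Since `x` is algebraic
over `K`, so is `d`; a place is trivial on `K`, hence on everything algebraic over `K`, so `d` is a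
unit of `O_T`. On the other hand `O_T` is integrally closed in `F` (an intersection of valuation
rings), and the classical trace/adjugate argument gives `d • z ∈ O_T[x]` for every `z` integral over
`O_T`. Thus `z = d⁻¹ • (d • z) ∈ O_T[x]`.
-/

section Places

variable {K F : Type*} [Field K] [Field F] [Algebra K F]

theorem IsFnPlace.mem_integer_of_isIntegral {v : Valuation F Zm0} (hv : IsFnPlace K v) {c : F}
    (hc : IsIntegral K c) : c ∈ v.integer := by
  have hK : ∀ a : K, algebraMap K F a ∈ v.integer := fun a => by
    by_cases ha : a = 0
    · simp [ha]
    · exact (hv.2 a ha).le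
  have hc' : IsIntegral v.integer c :=
    hc.map_of_comp_eq ((algebraMap K F).codRestrict v.integer hK) (RingHom.id F) rfl
  exact (Valuation.integer.integers v).mem_of_integral hc'

theorem sInt_le_integer {T : Set (Valuation F Zm0)} {v : Valuation F Zm0} (hv : IsFnPlace K v)
    (hvT : v ∉ T) : SInt K T ≤ v.integer := fun _ hy =>
  Subring.mem_iInf.1 (Subring.mem_iInf.1 (Subring.mem_iInf.1 hy v) hv) hvT

theorem mem_sInt_of_isIntegral (T : Set (Valuation F Zm0)) {c : F} (hc : IsIntegral K c) :
    c ∈ SInt K T :=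
  Subring.mem_iInf.2 fun _ => Subring.mem_iInf.2 fun hv => Subring.mem_iInf.2 fun _ =>
    hv.mem_integer_of_isIntegral hc

instance (T : Set (Valuation F Zm0)) : IsIntegrallyClosedIn (SInt K T) F := by
  refine isIntegrallyClosedIn_iff.2 ⟨Subtype.val_injective, fun {y} hy => ?_⟩
  refine ⟨⟨y, Subring.mem_iInf.2 fun v => Subring.mem_iInf.2 fun hv => Subring.mem_iInf.2
    fun hvT => ?_⟩, rfl⟩
  have hy' : IsIntegral v.integer y :=
    hy.map_of_comp_eq (Subring.inclusion (sInt_le_integer hv hvT)) (RingHom.id F) rfl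
  exact (Valuation.integer.integers v).mem_of_integral hy'

end Places

theorem IsIntegral.of_subring_map {F L : Type*} [Field F] [CommRing L] [Nontrivial L]
    [Algebra F L] {A : Subring F} {x : L} (hx : IsIntegral (A.map (algebraMap F L)) x) :
    IsIntegral A x := by
  let e := A.equivMapOfInjective _ (algebraMap F L).injective
  refine hx.map_of_comp_eq e.symm.toRingHom (RingHom.id L) (RingHom.ext fun a => ?_)
  conv_rhs => rw [← e.apply_symm_apply a]
  rfl

section Discriminant

open Matrix Algebra

variable {R K L : Type*} [CommRing R] [Field K] [Field L] [Algebra R K] [Algebra K L]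
  [Algebra R L] [IsScalarTower R K L] [IsIntegrallyClosedIn R K] [FiniteDimensional K L]

theorem Algebra.discr_smul_equivFun_mem_range {ι : Type*} [Fintype ι] [DecidableEq ι]
    (b : Module.Basis ι K L) (hb : ∀ i, IsIntegral R (b i)) {z : L} (hz : IsIntegral R z)
    (i : ι) : discr K b • b.equivFun z i ∈ (algebraMap R K).range := by
  have htrace : ∀ y : L, IsIntegral R y → ∃ r : R, algebraMap R K r = trace K L y := fun y hy =>
    IsIntegrallyClosedIn.algebraMap_eq_of_integral (isIntegral_trace hy)
  obtain ⟨M, hM⟩ : ∃ M : Matrix ι ι R, (algebraMap R K).mapMatrix M = traceMatrix K b := by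
    choose M hM using fun i j => htrace _ ((hb i).mul (hb j))
    exact ⟨Matrix.of M, by ext i j; simp [hM, traceMatrix_apply]⟩
  choose t ht using fun j => htrace _ (hz.mul (hb j))
  -- Cramer's rule: the coordinates `c` of `z` solve `traceMatrix K b *ᵥ c = (Tr (z * b j))_j`.
  have key : discr K b • b.equivFun z = fun i => algebraMap R K ((adjugate M *ᵥ t) i) :=
    calc discr K b • b.equivFun z
        = (adjugate (traceMatrix K b) * traceMatrix K b) *ᵥ b.equivFun z := by
          rw [adjugate_mul, smul_mulVec, one_mulVec, discr_def]
      _ = adjugate (traceMatrix K b) *ᵥ fun j => trace K L (z * b j) := by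
          rw [← mulVec_mulVec, traceMatrix_of_basis_mulVec]
      _ = _ := by
          ext i
          rw [← hM, ← RingHom.map_adjugate, ← funext ht]
          exact (RingHom.map_mulVec _ _ _ i).symm
  exact ⟨_, (congr_fun key i).symm⟩

theorem Algebra.discr_mul_isIntegral_mem_adjoin' (B : PowerBasis K L) (hB : IsIntegral R B.gen)
    {z : L} (hz : IsIntegral R z) : discr K B.basis • z ∈ adjoin R {B.gen} := by
  have hbasis : ∀ i, IsIntegral R (B.basis i) := fun i => by
    rw [B.basis_eq_pow]
    exact hB.pow _
  rw [← B.basis.sum_equivFun z, Finset.smul_sum]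
  refine Subalgebra.sum_mem _ fun i _ => ?_
  obtain ⟨r, hr⟩ := discr_smul_equivFun_mem_range B.basis hbasis hz i
  rw [← smul_assoc, ← hr, algebraMap_smul, B.basis_eq_pow]
  exact Subalgebra.smul_mem _ (Subalgebra.pow_mem _ (subset_adjoin (Set.mem_singleton _)) _) _

end Discriminant

theorem stmt_10_general {K F F' : Type*} [Field K] [Field F] [Field F'] [Algebra K F] [Algebra F F']
    [Algebra K F'] [IsScalarTower K F F']
    [FiniteDimensional F F'] [Algebra.IsSeparable F F']
    (T : Set (Valuation F Zm0)) (x : F')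
    (hgen : IntermediateField.adjoin F ({x} : Set F') = ⊤)
    (hxalg : IsAlgebraic K x)
    (hxint : IsIntegral ↥((SInt K T).map (algebraMap F F' : F →+* F')) x) :
    ∀ z : F',
      IsIntegral ↥(Subring.closure ((algebraMap F F' '' (SInt K T : Set F)) ∪ {x})) z →
      z ∈ Subring.closure ((algebraMap F F' '' (SInt K T : Set F)) ∪ {x}) := by
  intro z hz
  set A := SInt K T
  have hclosure : Subring.closure (algebraMap F F' '' (A : Set F) ∪ {x}) =
      (Algebra.adjoin A {x}).toSubring := by
    rw [Algebra.adjoin_eq_ring_closure, IsScalarTower.algebraMap_eq A F F', RingHom.coe_comp,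
      Set.range_comp]
    congr
    exact Subtype.range_coe.symm
  rw [hclosure] at hz ⊢
  have hxA : IsIntegral A x := hxint.of_subring_map
  have : Algebra.IsIntegral A (Algebra.adjoin A {x}) := Algebra.IsIntegral.adjoin (by simpa)
  have hzA : IsIntegral A z := isIntegral_trans (A := Algebra.adjoin A {x}) z hz
  have hxF : IsIntegral F x := hxA.tower_top
  let B := PowerBasis.ofAdjoinEqTop hxF
    ((IntermediateField.adjoin_simple_eq_top_iff_of_isAlgebraic hxF.isAlgebraic).1 hgen)
  set d := Algebra.discr F B.basis
  have hd : IsIntegral K d := Algebra.discr_isIntegral F fun i => by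
    rw [B.basis_eq_pow]
    exact hxalg.isIntegral.pow _
  have hdinv : d⁻¹ ∈ A := mem_sInt_of_isIntegral T hd.isAlgebraic.inv.isIntegral
  have hdz : d • z ∈ Algebra.adjoin A {x} := Algebra.discr_mul_isIntegral_mem_adjoin' B hxA hzA
  have hz_eq : z = (⟨d⁻¹, hdinv⟩ : A) • d • z := by
    rw [Subring.smul_def, smul_smul, inv_mul_cancel₀ (Algebra.discr_not_zero_of_basis F B.basis),
      one_smul]
  rw [hz_eq]
  exact Subalgebra.smul_mem _ hdz _

/-- Lemma 6(c): if `x` is algebraic over `K` (and integral over `O_T`), then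
`O_T[x]` is integrally closed in `F'`. -/
theorem stmt_10 {K F F' : Type*} [Field K] [Field F] [Field F'] [Algebra K F] [Algebra F F']
    [Algebra K F'] [IsScalarTower K F F']
    [PerfectField K] [FiniteDimensional F F'] [Algebra.IsSeparable F F']
    (hFK : IsAlgFunctionField K F)
    (T : Set (Valuation F Zm0)) (x : F')
    (hgen : IntermediateField.adjoin F ({x} : Set F') = ⊤)
    (hxalg : IsAlgebraic K x)
    (hxint : IsIntegral ↥((SInt K T).map (algebraMap F F' : F →+* F')) x) :
    ∀ z : F',
      IsIntegral ↥(Subring.closure ((algebraMap F F' '' (SInt K T : Set F)) ∪ {x})) z →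
      z ∈ Subring.closure ((algebraMap F F' '' (SInt K T : Set F)) ∪ {x}) :=
  stmt_10_general T x hgen hxalg hxint
end

section
/- Let F/K be an algebraic function field with perfect constant field K, S a set of places of F/K, and K'/K a finite extension. Then the integral closure of O_S in the constant field extension K'F is K'·O_S (the subring generated by K' and O_S). -/
open Multiplicative

/-!
Since `K` is perfect, `K' = K(α)` for a primitive element `α`, and then `K'F = F(α)` with `α`
integral over `K`. The discriminant `d` of the power basis `1, α, …, α^(n-1)` of `K'F/F` is a
nonzero element of `F` integral over `K`, hence a unit at every place. If `z` is integral over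
`O_S`, then at each place `P ∉ S` it is integral over the valuation ring `O_P`, so `d z ∈ O_P[α]`
and the coordinates of `z` lie in `O_P`. Hence they lie in `O_S`, and `z ∈ O_S[α] ⊆ K'·O_S`.
Conversely `K'·O_S` is integral over `O_S` because `K'` is integral over `K ⊆ O_S`.
-/

open Polynomial IntermediateField

theorem IsIntegral.of_range_le {R T A : Type*} [CommRing R] [CommRing T] [CommRing A]
    [Algebra R A] [Algebra T A] (h : (algebraMap R A).range ≤ (algebraMap T A).range)
    {z : A} (hz : IsIntegral R z) : IsIntegral T z := by
  obtain ⟨p, hp, hpz⟩ := hz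
  have hlift : p.map (algebraMap R A) ∈ lifts (algebraMap T A) :=
    (lifts_iff_coeff_lifts _).mpr fun n => by rw [coeff_map]; exact h ⟨_, rfl⟩
  obtain ⟨q, hq, -, hqm⟩ := lifts_and_natDegree_eq_and_monic hlift (hp.map _)
  exact ⟨q, hqm, by rw [eval₂_eq_eval_map, hq, ← eval₂_eq_eval_map, hpz]⟩

theorem Subring.isIntegral_map_algebraMap_iff {F L : Type*} [CommRing F] [CommRing L]
    [Algebra F L] (A : Subring F) {z : L} :
    IsIntegral (A.map (algebraMap F L)) z ↔ IsIntegral A z := by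
  constructor <;> refine IsIntegral.of_range_le ?_
  · rintro _ ⟨⟨_, x, hx, rfl⟩, rfl⟩
    exact ⟨⟨x, hx⟩, rfl⟩
  · rintro _ ⟨⟨x, hx⟩, rfl⟩
    exact ⟨⟨_, x, hx, rfl⟩, rfl⟩

theorem ValuationSubring.mem_of_isIntegral {R F : Type*} [CommRing R] [Field F] [Algebra R F]
    (A : ValuationSubring F) (hR : (algebraMap R F).range ≤ A.toSubring) {x : F}
    (hx : IsIntegral R x) : x ∈ A := by
  have hxA : IsIntegral A x := hx.of_range_le fun y hy => ⟨⟨y, hR hy⟩, rfl⟩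
  obtain ⟨y, rfl⟩ := IsIntegrallyClosed.isIntegral_iff.mp hxA
  exact y.2

section Places

variable {K F : Type*} [Field K] [Field F] [Algebra K F]

theorem IsFnPlace.algebraMap_mem {v : Valuation F Zm0} (hv : IsFnPlace K v) (c : K) :
    algebraMap K F c ∈ v.valuationSubring := by
  rcases eq_or_ne c 0 with rfl | hc
  · simp
  · exact (hv.2 c hc).le

theorem IsFnPlace.valuation_eq_one_of_isIntegral {v : Valuation F Zm0} (hv : IsFnPlace K v)
    {x : F} (hx0 : x ≠ 0) (hx : IsIntegral K x) : v x = 1 := by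
  have hK : (algebraMap K F).range ≤ v.valuationSubring.toSubring := by
    rintro _ ⟨c, rfl⟩
    exact hv.algebraMap_mem c
  have hle : v x ≤ 1 := v.valuationSubring.mem_of_isIntegral hK hx
  have hinv : v x⁻¹ ≤ 1 := v.valuationSubring.mem_of_isIntegral hK hx.inv
  rw [map_inv₀, inv_le_one₀ ((v.pos_iff).mpr hx0)] at hinv
  exact le_antisymm hle hinv

theorem mem_SInt_iff {S : Set (Valuation F Zm0)} {x : F} :
    x ∈ SInt K S ↔ ∀ v : Valuation F Zm0, IsFnPlace K v → v ∉ S → v x ≤ 1 := by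
  simp only [SInt, Subring.mem_iInf]
  rfl

theorem algebraMap_mem_SInt (S : Set (Valuation F Zm0)) (c : K) : algebraMap K F c ∈ SInt K S :=
  mem_SInt_iff.mpr fun _ hv _ => hv.algebraMap_mem c

end Places

namespace PowerBasis

variable {R F L : Type*} [CommRing R] [Field F] [Field L] [Algebra R F] [Algebra F L]
  [Algebra R L] [IsScalarTower R F L] {B : PowerBasis F L}

theorem isIntegral_repr_of_mem_adjoin (hB : IsIntegral R B.gen)
    (hmin : minpoly F B.gen = (minpoly R B.gen).map (algebraMap R F)) {x : L}
    (hx : x ∈ Algebra.adjoin R {B.gen}) : ∀ i, IsIntegral R (B.basis.repr x i) := by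
  induction hx using Algebra.adjoin_induction with
  | mem x hx =>
    rw [Set.mem_singleton_iff.mp hx, ← pow_one B.gen]
    exact repr_gen_pow_isIntegral hB hmin 1
  | algebraMap r =>
    intro i
    rw [IsScalarTower.algebraMap_apply R F L, Algebra.algebraMap_eq_smul_one, ← pow_zero B.gen,
      map_smul, Finsupp.smul_apply, smul_eq_mul]
    exact isIntegral_algebraMap.mul (repr_gen_pow_isIntegral hB hmin 0 i)
  | add x y _ _ hx hy => exact fun i => by rw [map_add]; exact (hx i).add (hy i)
  | mul x y _ _ hx hy => exact repr_mul_isIntegral hB hx hy hmin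

theorem isIntegral_discr_mul_repr [IsDomain R] [IsIntegrallyClosed R] [IsFractionRing R F]
    [Algebra.IsSeparable F L] (hB : IsIntegral R B.gen) {z : L} (hz : IsIntegral R z)
    (i : Fin B.dim) :
    IsIntegral R (Algebra.discr F B.basis * B.basis.repr z i) := by
  have := B.finite
  have hmem := Algebra.discr_mul_isIntegral_mem_adjoin F hB hz
  rw [← smul_eq_mul, ← Finsupp.smul_apply, ← map_smul]
  exact isIntegral_repr_of_mem_adjoin hB (minpoly.isIntegrallyClosed_eq_field_fractions' F hB)
    hmem i

end PowerBasis

theorem PowerBasis.repr_mem_SInt_of_isIntegral {K F L : Type*} [Field K] [Field F] [Field L]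
    [Algebra K F] [Algebra K L] [Algebra F L] [IsScalarTower K F L] [Algebra.IsSeparable F L]
    {S : Set (Valuation F Zm0)} (B : PowerBasis F L) (hB : IsIntegral K B.gen) {z : L}
    (hz : IsIntegral (SInt K S) z) (i : Fin B.dim) : B.basis.repr z i ∈ SInt K S := by
  have := B.finite
  have hd0 : Algebra.discr F B.basis ≠ 0 := Algebra.discr_not_zero_of_basis F B.basis
  have hdK : IsIntegral K (Algebra.discr F B.basis) :=
    Algebra.discr_isIntegral F fun j => by rw [B.coe_basis]; exact hB.pow _
  refine mem_SInt_iff.mpr fun v hv hvS => ?_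
  have hBv : IsIntegral v.valuationSubring B.gen := hB.of_range_le <| by
    rintro _ ⟨c, rfl⟩
    exact ⟨⟨_, hv.algebraMap_mem c⟩, (IsScalarTower.algebraMap_apply K F L c).symm⟩
  have hzv : IsIntegral v.valuationSubring z := hz.of_range_le <| by
    rintro _ ⟨⟨x, hx⟩, rfl⟩
    exact ⟨⟨x, mem_SInt_iff.mp hx v hv hvS⟩, rfl⟩
  have hmem : Algebra.discr F B.basis * B.basis.repr z i ∈ v.valuationSubring :=
    v.valuationSubring.mem_of_isIntegral (by rintro _ ⟨y, rfl⟩; exact y.2)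
      (B.isIntegral_discr_mul_repr hBv hzv i)
  rwa [Valuation.mem_valuationSubring_iff, map_mul, hv.valuation_eq_one_of_isIntegral hd0 hdK,
    one_mul] at hmem

theorem Algebra.isSeparable_of_adjoin_simple_eq_top {F L : Type*} [Field F] [Field L]
    [Algebra F L] {x : L} (hx : IsSeparable F x) (htop : F⟮x⟯ = ⊤) : Algebra.IsSeparable F L :=
  have := (isSeparable_adjoin_simple_iff_isSeparable F L).mpr hx
  Algebra.IsSeparable.of_algHom F F⟮x⟯ ((equivOfEq htop).trans topEquiv).symm.toAlgHom

section ConstantFieldExtension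

variable {K K' F F' : Type*} [Field K] [Field K'] [Field F] [Field F']
  [Algebra K F] [Algebra K K'] [Algebra K F'] [Algebra K' F'] [Algebra F F']
  [IsScalarTower K K' F'] [IsScalarTower K F F']

theorem adjoin_algebraMap_eq_top_of_compositum
    (hcomp : Subfield.closure
      (Set.range (algebraMap F F') ∪ Set.range (algebraMap K' F')) = ⊤)
    {α : K'} (hα : K⟮α⟯ = ⊤) : F⟮algebraMap K' F' α⟯ = ⊤ := by
  set E := F⟮algebraMap K' F' α⟯
  have hK' : (⊤ : IntermediateField K K') ≤ (E.restrictScalars K).comap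
      (IsScalarTower.toAlgHom K K' F') := by
    rw [← hα, adjoin_simple_le_iff]
    exact mem_adjoin_simple_self F _
  have hle : Subfield.closure
      (Set.range (algebraMap F F') ∪ Set.range (algebraMap K' F')) ≤ E.toSubfield := by
    refine Subfield.closure_le.mpr ?_
    rintro _ (⟨x, rfl⟩ | ⟨c, rfl⟩)
    · exact E.algebraMap_mem x
    · exact hK' (mem_top : c ∈ ⊤)
  rw [hcomp] at hle
  exact eq_top_iff.mpr fun y _ => hle (Subfield.mem_top y)

theorem closure_le_integralClosure_SInt [Algebra.IsIntegral K K'] (S : Set (Valuation F Zm0)) :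
    Subring.closure ((algebraMap F F' '' (SInt K S : Set F)) ∪ Set.range (algebraMap K' F')) ≤
      (integralClosure (SInt K S) F').toSubring := by
  refine Subring.closure_le.mpr ?_
  rintro _ (⟨x, hx, rfl⟩ | ⟨c, rfl⟩)
  · exact isIntegral_algebraMap (x := (⟨x, hx⟩ : SInt K S))
  · have hcK := (Algebra.IsIntegral.isIntegral (R := K) c).map (IsScalarTower.toAlgHom K K' F')
    refine hcK.of_range_le ?_
    rintro _ ⟨k, rfl⟩
    exact ⟨⟨_, algebraMap_mem_SInt S k⟩, (IsScalarTower.algebraMap_apply K F F' k).symm⟩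

end ConstantFieldExtension

theorem mem_closure_of_isIntegral_SInt {K K' F F' : Type*} [Field K] [CommRing K'] [Field F]
    [Field F'] [Algebra K F] [Algebra K F'] [Algebra K' F'] [Algebra F F'] [IsScalarTower K F F']
    {S : Set (Valuation F Zm0)} {α : K'}
    (hαK : IsIntegral K (algebraMap K' F' α)) (htop : F⟮algebraMap K' F' α⟯ = ⊤)
    [Algebra.IsSeparable F F'] {z : F'} (hz : IsIntegral (SInt K S) z) :
    z ∈ Subring.closure
      ((algebraMap F F' '' (SInt K S : Set F)) ∪ Set.range (algebraMap K' F')) := by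
  let B := PowerBasis.ofAdjoinEqTop hαK.tower_top
    (Algebra.adjoin_eq_top_of_primitive_element hαK.tower_top.isAlgebraic htop)
  have hBK : IsIntegral K B.gen := by rwa [PowerBasis.ofAdjoinEqTop_gen]
  set T := Subring.closure
    ((algebraMap F F' '' (SInt K S : Set F)) ∪ Set.range (algebraMap K' F'))
  have hOS : ∀ x ∈ SInt K S, algebraMap F F' x ∈ T :=
    fun x hx => Subring.subset_closure (Or.inl ⟨x, hx, rfl⟩)
  have hK' : ∀ c : K', algebraMap K' F' c ∈ T :=
    fun c => Subring.subset_closure (Or.inr ⟨c, rfl⟩)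
  rw [← B.basis.sum_repr z]
  refine T.sum_mem fun i _ => ?_
  rw [Algebra.smul_def, B.coe_basis, PowerBasis.ofAdjoinEqTop_gen]
  exact T.mul_mem (hOS _ (B.repr_mem_SInt_of_isIntegral hBK hz i)) (T.pow_mem (hK' α) _)

theorem stmt_11_general {K K' F F' : Type*} [Field K] [Field K'] [Field F] [Field F']
    [Algebra K F] [Algebra K K'] [Algebra K F'] [Algebra K' F'] [Algebra F F']
    [IsScalarTower K K' F'] [IsScalarTower K F F']
    [PerfectField K]
    [FiniteDimensional K K']
    -- `F'` is the compositum `K'F` of `K'` and `F`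
    (hcomp : Subfield.closure
      (Set.range (algebraMap F F') ∪ Set.range (algebraMap K' F')) = ⊤)
    (S : Set (Valuation F Zm0)) :
    ∀ z : F',
      IsIntegral ↥((SInt K S).map (algebraMap F F' : F →+* F')) z ↔
      z ∈ Subring.closure
        ((algebraMap F F' '' (SInt K S : Set F)) ∪ Set.range (algebraMap K' F')) := by
  intro z
  rw [Subring.isIntegral_map_algebraMap_iff]
  refine ⟨fun hz => ?_, fun hz => closure_le_integralClosure_SInt S hz⟩
  obtain ⟨α, hα⟩ := Field.exists_primitive_element K K'
  have hαK : IsIntegral K (algebraMap K' F' α) :=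
    (Algebra.IsIntegral.isIntegral α).map (IsScalarTower.toAlgHom K K' F')
  have htop := adjoin_algebraMap_eq_top_of_compositum hcomp hα
  have hαsep : IsSeparable K (algebraMap K' F' α) :=
    PerfectField.separable_of_irreducible (minpoly.irreducible hαK)
  have : Algebra.IsSeparable F F' :=
    Algebra.isSeparable_of_adjoin_simple_eq_top (hαsep.tower_top F) htop
  exact mem_closure_of_isIntegral_SInt hαK htop hz

/-- Corollary 7: for a finite extension `K'/K`, the integral closure of
`O_S` in the constant field extension `K'F` is the subring `K'·O_S` generated by `K'`
and `O_S`. -/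
theorem stmt_11 {K K' F F' : Type*} [Field K] [Field K'] [Field F] [Field F']
    [Algebra K F] [Algebra K K'] [Algebra K F'] [Algebra K' F'] [Algebra F F']
    [IsScalarTower K K' F'] [IsScalarTower K F F']
    [PerfectField K] (hFK : IsAlgFunctionField K F)
    [FiniteDimensional K K']
    -- `F'` is the compositum `K'F` of `K'` and `F`
    (hcomp : Subfield.closure
      (Set.range (algebraMap F F') ∪ Set.range (algebraMap K' F')) = ⊤)
    (S : Set (Valuation F Zm0)) :
    ∀ z : F',
      IsIntegral ↥((SInt K S).map (algebraMap F F' : F →+* F')) z ↔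
      z ∈ Subring.closure
        ((algebraMap F F' '' (SInt K S : Set F)) ∪ Set.range (algebraMap K' F')) :=
  stmt_11_general hcomp S
end

section
/- Let F/K be an algebraic function field over a perfect field K, S a set of places, F' = F(x) a finite separable extension of degree n with x integral over O_S. If f ∈ ∩_{P∉S} O_P[x] (intersection inside F'), then f ∈ (∩_{P∉S} O_P)[x]; that is, ∩_{P∉S}(O_P[x]) = O_S[x] provided each O_P[x] is the integral closure of O_P in F'. -/
open Multiplicative

/-! Write `f = p(x)` with `p ∈ F[X]` and let `μ` be the minimal polynomial of `x` over `F`.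
Since `x` is integral over each integrally closed `O_P`, `μ` has coefficients in `O_P`, so if
`f = q(x)` with `q ∈ O_P[X]` then `p %ₘ μ = q %ₘ μ ∈ O_P[X]`. The remainder `p %ₘ μ` does not
depend on `P`, hence has coefficients in `⋂_{P ∉ S} O_P = O_S`. -/

open Polynomial

section ClosurePolynomial

variable {A B : Type*} [CommRing A] [CommRing B] [Algebra A B]

theorem mem_closure_image_union_singleton_iff (R : Subring A) (x f : B) :
    f ∈ Subring.closure (algebraMap A B '' (R : Set A) ∪ {x}) ↔
      ∃ p : A[X], (∀ i, p.coeff i ∈ R) ∧ aeval x p = f := by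
  have hrange : Set.range (algebraMap R B) = algebraMap A B '' (R : Set A) := by
    ext y
    simp only [Set.mem_range, Set.mem_image, SetLike.mem_coe, IsScalarTower.algebraMap_apply R A B,
      Subtype.exists]
    exact ⟨fun ⟨a, ha, h⟩ => ⟨a, ha, h⟩, fun ⟨a, ha, h⟩ => ⟨a, ha, h⟩⟩
  rw [← hrange, ← Algebra.adjoin_eq_ring_closure, Subalgebra.mem_toSubring,
    Algebra.adjoin_singleton_eq_range_aeval]
  constructor
  · rintro ⟨q, rfl⟩
    exact ⟨q.map R.subtype, fun i => by simp, aeval_map_algebraMap A x q⟩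
  · rintro ⟨p, hp, rfl⟩
    obtain ⟨q, rfl⟩ := (lifts_iff_coeff_lifts (f := R.subtype) p).mpr fun i => by simpa using hp i
    exact ⟨q, (aeval_map_algebraMap A x q).symm⟩

end ClosurePolynomial

theorem Subring.isIntegral_of_isIntegral_map {F F' : Type*} [Field F] [Field F'] [Algebra F F']
    {R T : Subring F} (hRT : R ≤ T) {x : F'} (hx : IsIntegral (R.map (algebraMap F F')) x) :
    IsIntegral T x := by
  let e := R.equivMapOfInjective _ (algebraMap F F').injective
  refine hx.map_of_comp_eq ((Subring.inclusion hRT).comp e.symm.toRingHom) (RingHom.id F') ?_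
  ext a
  simp only [RingHom.coe_comp, Function.comp_apply, RingHom.id_apply]
  conv_rhs => rw [← e.apply_symm_apply a]
  rfl

theorem lifts_modByMonic_minpoly {R F F' : Type*} [CommRing R] [IsDomain R] [IsIntegrallyClosed R]
    [Field F] [Algebra R F] [IsFractionRing R F] [Field F'] [Algebra R F'] [Algebra F F']
    [IsScalarTower R F F'] {x : F'} (hx : IsIntegral R x) {p : F[X]}
    (hp : p ∈ lifts (algebraMap R F)) : p %ₘ minpoly F x ∈ lifts (algebraMap R F) := by
  obtain ⟨q, rfl⟩ := hp
  rw [minpoly.isIntegrallyClosed_eq_field_fractions' F hx, coe_mapRingHom,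
    ← map_modByMonic _ (minpoly.monic hx)]
  exact ⟨_, rfl⟩

section SInt

variable {K F : Type*} [Field K] [Field F] [Algebra K F] {S : Set (Valuation F Zm0)}

theorem mem_sInt_iff {a : F} :
    a ∈ SInt K S ↔ ∀ v : Valuation F Zm0, IsFnPlace K v → v ∉ S → a ∈ v.valuationSubring := by
  simp only [SInt, Subring.mem_iInf]
  rfl

theorem sInt_le_valuationSubring {v : Valuation F Zm0} (hv : IsFnPlace K v) (hvS : v ∉ S) :
    SInt K S ≤ v.valuationSubring.toSubring :=
  fun _ ha => mem_sInt_iff.mp ha v hv hvS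

end SInt

theorem stmt_19_general {K F F' : Type*} [Field K] [Field F] [Field F'] [Algebra K F]
    [Algebra F F'] (S : Set (Valuation F Zm0)) (x : F')
    (hgen : IntermediateField.adjoin F ({x} : Set F') = ⊤)
    (hxint : IsIntegral ↥((SInt K S).map (algebraMap F F' : F →+* F')) x) :
    ∀ f : F',
      f ∈ Subring.closure ((algebraMap F F' '' (SInt K S : Set F)) ∪ {x}) ↔
      ∀ v : Valuation F Zm0, IsFnPlace K v → v ∉ S →
        f ∈ Subring.closure ((algebraMap F F' '' (v.valuationSubring : Set F)) ∪ {x}) := by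
  intro f
  constructor
  · intro hf v hv hvS
    exact Subring.closure_mono
      (Set.union_subset_union_left _ (Set.image_mono (sInt_le_valuationSubring hv hvS))) hf
  · intro hf
    have hxF : IsIntegral F x := (Subring.isIntegral_of_isIntegral_map le_rfl hxint).tower_top
    obtain ⟨p, rfl⟩ : f ∈ (aeval (R := F) x).range := by
      rw [← Algebra.adjoin_singleton_eq_range_aeval,
        ← IntermediateField.adjoin_simple_toSubalgebra_of_isAlgebraic hxF.isAlgebraic, hgen]
      trivial
    refine (mem_closure_image_union_singleton_iff _ x _).mpr
      ⟨p %ₘ minpoly F x, fun i => mem_sInt_iff.mpr fun v hv hvS => ?_,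
        aeval_modByMonic_eq_self_of_root (minpoly.aeval F x)⟩
    obtain ⟨q, hq, hqp⟩ := (mem_closure_image_union_singleton_iff _ x _).mp (hf v hv hvS)
    have hpq : p %ₘ minpoly F x = q %ₘ minpoly F x :=
      modByMonic_eq_of_dvd_sub (minpoly.monic hxF) (minpoly.dvd F x (by simp [hqp]))
    have hxv : IsIntegral v.valuationSubring x :=
      Subring.isIntegral_of_isIntegral_map (sInt_le_valuationSubring hv hvS) hxint
    have hqv : q ∈ lifts (algebraMap v.valuationSubring F) :=
      (lifts_iff_coeff_lifts q).mpr fun j => by simpa using hq j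
    obtain ⟨r, hr⟩ := lifts_modByMonic_minpoly hxv hqv
    rw [hpq, ← hr, coe_mapRingHom, coeff_map]
    exact (r.coeff i).2

/-- if each `O_P[x]` (for `P ∉ S`) is the integral closure of `O_P` in
`F' = F(x)` of degree `n`, then `⋂_{P∉S} O_P[x] = O_S[x]` — an element of `F'` lies in
`O_S[x]` iff it lies in every `O_P[x]`, `P ∉ S`. -/
theorem stmt_19 {K F F' : Type*} [Field K] [Field F] [Field F'] [Algebra K F]
    [Algebra F F'] [PerfectField K] [FiniteDimensional F F'] [Algebra.IsSeparable F F']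
    (hFK : IsAlgFunctionField K F)
    (n : ℕ) (hn : Module.finrank F F' = n)
    (S : Set (Valuation F Zm0)) (x : F')
    (hgen : IntermediateField.adjoin F ({x} : Set F') = ⊤)
    (hxint : IsIntegral ↥((SInt K S).map (algebraMap F F' : F →+* F')) x)
    (hloc : ∀ v : Valuation F Zm0, IsFnPlace K v → v ∉ S →
      ∀ z : F',
        z ∈ Subring.closure ((algebraMap F F' '' (v.valuationSubring : Set F)) ∪ {x}) ↔
        IsIntegral ↥((v.valuationSubring.toSubring).map (algebraMap F F' : F →+* F')) z) :
    ∀ f : F',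
      f ∈ Subring.closure ((algebraMap F F' '' (SInt K S : Set F)) ∪ {x}) ↔
      ∀ v : Valuation F Zm0, IsFnPlace K v → v ∉ S →
        f ∈ Subring.closure ((algebraMap F F' '' (v.valuationSubring : Set F)) ∪ {x}) :=
  stmt_19_general S x hgen hxint
end
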